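/- arXiv:math/0612178 — 3 statements merged into one kernel-verified Lean document; each statement's English description precedes it below -/
import Mathlib

section
/- Let G be a self-similar group of automorphisms of the rooted binary tree (i.e., for every g ∈ G and every letter x ∈ {0,1}, the section g|_x belongs to G). Then G acts transitively on every level of the tree (on the set of binary words of each fixed length) if and only if G is infinite. -/
/-- `g` is an automorphism of the rooted binary tree, modelled as a bijection
of the set of finite binary words that fixes the empty word, preserves the
length of words, and preserves the prefix relation. -/
def IsTreeAut (g : Equiv.Perm (List Bool)) : Prop :=
  g [] = [] ∧ (∀ w : List Bool, (g w).length = w.length) ∧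
    ∀ u v : List Bool, u <+: v → g u <+: g v

namespace SSAux

variable {G : Subgroup (Equiv.Perm (List Bool))}

lemma take_apply {g : Equiv.Perm (List Bool)} (hg : IsTreeAut g) {u v : List Bool}
    (huv : u <+: v) : g u = (g v).take u.length := by
  obtain ⟨t, ht⟩ := hg.2.2 u v huv
  rw [← ht, show u.length = (g u).length from (hg.2.1 u).symm, List.take_left]

lemma child {g : Equiv.Perm (List Bool)} (hg : IsTreeAut g) (w : List Bool) (c : Bool) :
    ∃ d, g (w ++ [c]) = g w ++ [d] := by
  obtain ⟨t, ht⟩ := hg.2.2 w (w ++ [c]) ⟨[c], rfl⟩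
  have h1 : t.length = 1 := by
    have e1 := hg.2.1 (w ++ [c])
    have e2 := hg.2.1 w
    rw [← ht] at e1
    simp [List.length_append] at e1 ⊢
    omega
  obtain ⟨d, rfl⟩ := List.length_eq_one_iff.mp h1
  exact ⟨d, ht.symm⟩

/-- a vertex is active if some element of `G` fixes it and swaps its children. -/
def Active (G : Subgroup (Equiv.Perm (List Bool))) (u : List Bool) : Prop :=
  ∃ g ∈ G, g (u ++ [false]) = u ++ [true]

lemma active_tail (hG : ∀ g ∈ G, IsTreeAut g)
    (hself : ∀ g ∈ G, ∀ x : Bool, ∃ s ∈ G, ∀ w : List Bool, g (x :: w) = g [x] ++ s w)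
    {x : Bool} {u : List Bool} (h : Active G (x :: u)) : Active G u := by
  obtain ⟨g, hgG, hg⟩ := h
  obtain ⟨s, hsG, hs⟩ := hself g hgG x
  have hg' : g (x :: (u ++ [false])) = x :: (u ++ [true]) := by simpa using hg
  have hx : g [x] = [x] := by
    have := take_apply (hG g hgG) (⟨u ++ [false], rfl⟩ : [x] <+: x :: (u ++ [false]))
    rw [hg'] at this
    simpa using this
  have h2 := hs (u ++ [false])
  rw [hg', hx] at h2
  exact ⟨s, hsG, by simpa using h2.symm⟩

lemma active_drop (hG : ∀ g ∈ G, IsTreeAut g)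
    (hself : ∀ g ∈ G, ∀ x : Bool, ∃ s ∈ G, ∀ w : List Bool, g (x :: w) = g [x] ++ s w)
    (j : ℕ) : ∀ (u : List Bool), Active G u → Active G (u.drop j) := by
  induction j with
  | zero => intro u h; simpa using h
  | succ j ih =>
    intro u h
    cases u with
    | nil => simpa using h
    | cons x u => simpa using ih u (active_tail hG hself h)

end SSAux

/-- A self-similar group of automorphisms of the rooted binary tree is level
transitive (i.e. acts transitively on the binary words of each fixed length)
if and only if it is infinite. -/
theorem selfSimilar_levelTransitive_iff_infinite
    (G : Subgroup (Equiv.Perm (List Bool)))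
    (hG : ∀ g ∈ G, IsTreeAut g)
    (hself : ∀ g ∈ G, ∀ x : Bool, ∃ s ∈ G, ∀ w : List Bool,
      g (x :: w) = g [x] ++ s w) :
    (∀ (n : ℕ) (u v : List Bool), u.length = n → v.length = n →
      ∃ g ∈ G, g u = v) ↔ (G : Set (Equiv.Perm (List Bool))).Infinite := by
  classical
  constructor
  · -- level transitive → infinite
    intro htrans
    by_contra hfin
    rw [Set.not_infinite] at hfin
    have hfinT : Finite ↥(G : Set (Equiv.Perm (List Bool))) := hfin.to_subtype
    set N := Nat.card ↥(G : Set (Equiv.Perm (List Bool))) with hN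
    have hch := fun f : Fin (N + 1) → Bool =>
      htrans (N + 1) (List.replicate (N + 1) false) (List.ofFn f) (by simp) (by simp)
    choose gf hgfG hgf using hch
    have hinj : Function.Injective
        (fun f => (⟨gf f, hgfG f⟩ : ↥(G : Set (Equiv.Perm (List Bool))))) := by
      intro f₁ f₂ he
      have h1 : gf f₁ = gf f₂ := congrArg Subtype.val he
      have h2 : List.ofFn f₁ = List.ofFn f₂ := by
        rw [← hgf f₁, ← hgf f₂, h1]
      exact List.ofFn_injective h2
    have hcard := Nat.card_le_card_of_injective _ hinj
    have h2n : Nat.card (Fin (N + 1) → Bool) = 2 ^ (N + 1) := by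
      simp [Nat.card_eq_fintype_card]
    rw [h2n, ← hN] at hcard
    have hlt : N < 2 ^ N := Nat.lt_two_pow_self
    have : (2:ℕ) ^ N ≤ 2 ^ (N + 1) := Nat.pow_le_pow_right (by norm_num) (by omega)
    omega
  · -- infinite → level transitive
    intro hinf
    by_contra hnot
    push_neg at hnot
    have hex : ∃ n, ¬ ∀ u v : List Bool, u.length = n → v.length = n → ∃ g ∈ G, g u = v := by
      obtain ⟨n, u, v, h1, h2, h3⟩ := hnot
      exact ⟨n, fun H => by obtain ⟨g, hgG, he⟩ := H u v h1 h2; exact h3 g hgG he⟩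
    have hnfind := Nat.find_spec hex
    have hn0 : Nat.find hex ≠ 0 := by
      intro h0
      apply hnfind
      rw [h0]
      intro u v hu hv
      refine ⟨1, one_mem G, ?_⟩
      rw [List.length_eq_zero_iff.mp hu, List.length_eq_zero_iff.mp hv]
      simp
    obtain ⟨m, hm⟩ : ∃ m, Nat.find hex = m + 1 := ⟨Nat.find hex - 1, by omega⟩
    have htm : ∀ u v : List Bool, u.length = m → v.length = m → ∃ g ∈ G, g u = v :=
      not_not.mp (Nat.find_min hex (by omega : m < Nat.find hex))
    have hnt : ¬ ∀ u v : List Bool, u.length = m + 1 → v.length = m + 1 →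
        ∃ g ∈ G, g u = v := hm ▸ hnfind
    -- Step A : no vertex on level m is active
    have hActLevel : ∀ u : List Bool, u.length = m → ¬ SSAux.Active G u := by
      intro u₀ hu₀ hA
      have hAll : ∀ v : List Bool, v.length = m → SSAux.Active G v := by
        intro v hv
        obtain ⟨g, hgG, hgsw⟩ := hA
        obtain ⟨h, hhG, hhv⟩ := htm u₀ v hu₀ hv
        obtain ⟨d, hd⟩ := SSAux.child (hG h hhG) u₀ false
        obtain ⟨d', hd'⟩ := SSAux.child (hG h hhG) u₀ true
        rw [hhv] at hd hd'
        have hdd' : d' = !d := by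
          have hne : h (u₀ ++ [false]) ≠ h (u₀ ++ [true]) := fun he => by
            simpa using h.injective he
          rw [hd, hd'] at hne
          have hdne : d ≠ d' := fun e => hne (by rw [e])
          revert hdne; cases d <;> cases d' <;> decide
        cases d with
        | false =>
          refine ⟨h * g * h⁻¹, mul_mem (mul_mem hhG hgG) (inv_mem hhG), ?_⟩
          have h1 : h⁻¹ (v ++ [false]) = u₀ ++ [false] := by
            rw [← hd]; exact h.symm_apply_apply _
          simp only [Equiv.Perm.mul_apply]
          rw [h1, hgsw, hd', hdd']
          simp
        | true =>
          refine ⟨h * g⁻¹ * h⁻¹, mul_mem (mul_mem hhG (inv_mem hgG)) (inv_mem hhG), ?_⟩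
          have h1 : h⁻¹ (v ++ [false]) = u₀ ++ [true] := by
            rw [show v ++ [false] = h (u₀ ++ [true]) from by rw [hd', hdd']; simp]
            exact h.symm_apply_apply _
          have h2 : g⁻¹ (u₀ ++ [true]) = u₀ ++ [false] := by
            rw [← hgsw]; exact g.symm_apply_apply _
          simp only [Equiv.Perm.mul_apply]
          rw [h1, h2, hd]
      apply hnt
      intro u v hu hv
      obtain ⟨u', a, rfl⟩ : ∃ u' a, u = u' ++ [a] := by
        rcases List.eq_nil_or_concat u with rfl | ⟨L, b, hL⟩
        · simp at hu
        · exact ⟨L, b, by simpa [List.concat_eq_append] using hL⟩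
      obtain ⟨v', b, rfl⟩ : ∃ v' b, v = v' ++ [b] := by
        rcases List.eq_nil_or_concat v with rfl | ⟨L, b, hL⟩
        · simp at hv
        · exact ⟨L, b, by simpa [List.concat_eq_append] using hL⟩
      have hu' : u'.length = m := by simpa using hu
      have hv' : v'.length = m := by simpa using hv
      obtain ⟨h, hhG, hh⟩ := htm u' v' hu' hv'
      obtain ⟨c, hc⟩ := SSAux.child (hG h hhG) u' a
      rw [hh] at hc
      by_cases hcb : c = b
      · exact ⟨h, hhG, by rw [hc, hcb]⟩
      · obtain ⟨g', hg'G, hg'⟩ := hAll v' hv'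
        have hbc : b = !c := by revert hcb; cases b <;> cases c <;> decide
        cases c with
        | false =>
          refine ⟨g' * h, mul_mem hg'G hhG, ?_⟩
          simp only [Equiv.Perm.mul_apply]
          rw [hc, hg', hbc]
          simp
        | true =>
          refine ⟨g'⁻¹ * h, mul_mem (inv_mem hg'G) hhG, ?_⟩
          simp only [Equiv.Perm.mul_apply]
          have h2 : g'⁻¹ (v' ++ [true]) = v' ++ [false] := by
            rw [← hg']; exact g'.symm_apply_apply _
          rw [hc, h2, hbc]
          simp
    -- Step B : no vertex on level ≥ m is active
    have hNoAct : ∀ u : List Bool, m ≤ u.length → ¬ SSAux.Active G u := by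
      intro u hlen hA
      exact hActLevel (u.drop (u.length - m))
        (by simp only [List.length_drop]; omega)
        (SSAux.active_drop hG hself _ u hA)
    -- Step C : an element of G is determined by its action on level m
    have hdet : ∀ g ∈ G, ∀ h ∈ G,
        (∀ w : List Bool, w.length = m → g w = h w) → g = h := by
      intro g hgG h hhG hagree
      have hsmall : ∀ w : List Bool, w.length ≤ m → g w = h w := by
        intro w hw
        have hpref : w <+: w ++ List.replicate (m - w.length) false := ⟨_, rfl⟩
        have hlen : (w ++ List.replicate (m - w.length) false).length = m := by
          simp; omega
        rw [SSAux.take_apply (hG g hgG) hpref, SSAux.take_apply (hG h hhG) hpref,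
          hagree _ hlen]
      have hbig : ∀ k (w : List Bool), w.length = m + k → g w = h w := by
        intro k
        induction k with
        | zero => intro w hw; exact hsmall w (by omega)
        | succ k ih =>
          intro w hw
          obtain ⟨v, c, rfl⟩ : ∃ v c, w = v ++ [c] := by
            rcases List.eq_nil_or_concat w with rfl | ⟨L, b, hL⟩
            · simp at hw
            · exact ⟨L, b, by simpa [List.concat_eq_append] using hL⟩
          have hv : v.length = m + k := by simp at hw; omega
          have hgv : g v = h v := ih v hv
          obtain ⟨d, hd⟩ := SSAux.child (hG g hgG) v c
          obtain ⟨d', hd'⟩ := SSAux.child (hG h hhG) v c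
          rw [← hgv] at hd'
          by_cases hdd : d = d'
          · rw [hd, hd', hdd]
          · exfalso
            obtain ⟨e, he⟩ := SSAux.child (hG h hhG) v (!c)
            rw [← hgv] at he
            have hed : e = d := by
              have hne : h (v ++ [c]) ≠ h (v ++ [!c]) := fun heq => by
                have := h.injective heq
                simp at this
              rw [hd', he] at hne
              have h1 : d' ≠ e := fun x => hne (by rw [x])
              revert h1 hdd; cases d <;> cases d' <;> cases e <;> decide
            have ht : (h⁻¹ * g) (v ++ [c]) = v ++ [!c] := by
              simp only [Equiv.Perm.mul_apply]
              rw [hd, ← hed, ← he]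
              exact h.symm_apply_apply _
            have hAct : SSAux.Active G v := by
              cases c with
              | false => exact ⟨h⁻¹ * g, mul_mem (inv_mem hhG) hgG, by simpa using ht⟩
              | true =>
                refine ⟨(h⁻¹ * g)⁻¹, inv_mem (mul_mem (inv_mem hhG) hgG), ?_⟩
                rw [show v ++ [false] = (h⁻¹ * g) (v ++ [true]) from by simpa using ht.symm]
                exact Equiv.symm_apply_apply (h⁻¹ * g) _
            exact hNoAct v (by omega) hAct
      apply Equiv.ext
      intro w
      rcases le_or_gt w.length m with hl | hl
      · exact hsmall w hl
      · exact hbig (w.length - m) w (by omega)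
    -- Step D : G is finite, contradiction
    apply hinf
    have hfinlvl : Finite ↥{l : List Bool | l.length = m} :=
      (List.finite_length_eq Bool m).to_subtype
    rw [← Set.finite_coe_iff]
    refine Finite.of_injective
      (fun g : ↥(G : Set (Equiv.Perm (List Bool))) =>
        (fun w : {l : List Bool | l.length = m} =>
          (⟨g.1 w.1, by rw [Set.mem_setOf_eq, (hG g.1 g.2).2.1]; exact w.2⟩ :
            {l : List Bool | l.length = m}))) ?_
    intro g₁ g₂ heq
    apply Subtype.ext
    apply hdet g₁.1 g₁.2 g₂.1 g₂.2
    intro w hw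
    have := congrFun heq ⟨w, hw⟩
    exact congrArg Subtype.val this
end

section
/- Let A be an invertible automaton over the 2-letter alphabet X = {0,1} whose state set splits into two nonempty parts P and Q such that: (i) one of the parts contains all active states and the other contains all inactive states; (ii) for each state in P, both transitions lead to states in the same part (either both into P or both into Q); (iii) for each state in Q, one transition leads into P and the other into Q. Then every element of the automaton group G(A) that can be written as a product (in any order) of an odd number of active generators and an odd number of inactive generators has infinite order; in particular, G(A) is not a torsion group. -/
/-- An invertible automaton over the two-letter alphabet `Bool`:
a set of states `Q`, a transition map and an output map such that each state
acts on the alphabet by a permutation. -/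
structure BinAutomaton (Q : Type*) where
  trans : Q → Bool → Q
  out : Q → Bool → Bool
  out_bij : ∀ q, Function.Bijective (out q)

namespace BinAutomaton

variable {Q : Type*} (A : BinAutomaton Q)

/-- The action of a state on finite binary words:
`q(xw) = ρ(q,x) · (τ(q,x))(w)`. -/
def act : Q → List Bool → List Bool
  | _, [] => []
  | q, x :: w => A.out q x :: act (A.trans q x) w

theorem act_injective (q : Q) : Function.Injective (A.act q) := by
  intro u
  induction u generalizing q with
  | nil =>
    intro v h
    cases v with
    | nil => rfl
    | cons y v => simp [act] at h
  | cons x u ih =>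
    intro v h
    cases v with
    | nil => simp [act] at h
    | cons y v =>
      simp only [act, List.cons.injEq] at h
      obtain ⟨h1, h2⟩ := h
      obtain rfl : x = y := (A.out_bij q).1 h1
      rw [ih _ h2]

theorem act_surjective (q : Q) : Function.Surjective (A.act q) := by
  intro v
  induction v generalizing q with
  | nil => exact ⟨[], rfl⟩
  | cons y v ih =>
    obtain ⟨x, hx⟩ := (A.out_bij q).2 y
    obtain ⟨w, hw⟩ := ih (A.trans q x)
    exact ⟨x :: w, by simp [act, hx, hw]⟩

/-- The tree automorphism defined by the state `q`. -/
noncomputable def perm (q : Q) : Equiv.Perm (List Bool) :=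
  Equiv.ofBijective (A.act q) ⟨A.act_injective q, A.act_surjective q⟩

/-- The group generated by the automaton: the subgroup of the group of
bijections of the binary tree generated by the states. -/
noncomputable def autGroup : Subgroup (Equiv.Perm (List Bool)) :=
  Subgroup.closure (Set.range A.perm)

end BinAutomaton

/-- Helper constructing a 3-state automaton from the sections at `0`, the
sections at `1`, and the activity of each state. -/
def mkAut3 (t0 t1 : Fin 3 → Fin 3) (actv : Fin 3 → Bool) : BinAutomaton (Fin 3) where
  trans q x := cond x (t1 q) (t0 q)
  out q x := xor (actv q) x
  out_bij q := by
    have h : ∀ b : Bool, Function.Bijective fun x => xor b x := by decide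
    exact h (actv q)

/-!
Let `g` be a product of generators with an odd number of active and an odd number of
inactive factors. Then `g` swaps the two subtrees of the root, so `g²` fixes them, and its section
at `0` is the product of a word containing, for every factor of `g`, both of its sections. The
parity of the number of active states in that word is the parity of the number of factors whose
two sections have different activities, i.e. of the factors lying in the part `R`; whichever
part is active, this number is odd. So the section of `g²` is again of the same kind. If `g` had
finite order `n`, then `n` would be even (odd powers of `g` still swap the subtrees) and the
section of `g²` would have order at most `n / 2`: an infinite descent.
-/

theorem List.countP_add_countP_eq {α : Type*} (p q : α → Bool) (l : List α) :
    l.countP p + l.countP q =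
      l.countP (fun a => p a != q a) + 2 * l.countP (fun a => p a && q a) := by
  induction l with
  | nil => rfl
  | cons a l ih =>
    simp only [List.countP_cons]
    cases p a <;> cases q a <;> simp <;> omega

section OrderDescent

theorem not_isOfFinOrder_of_exists_orderOf_lt {G : Type*} [Monoid G] {S : Set G}
    (hS : ∀ g ∈ S, IsOfFinOrder g → ∃ h ∈ S, IsOfFinOrder h ∧ orderOf h < orderOf g)
    {g : G} (hg : g ∈ S) : ¬IsOfFinOrder g := by
  intro hfin
  induction hn : orderOf g using Nat.strong_induction_on generalizing g with
  | _ n ih =>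
    obtain ⟨h, hhS, hh, hlt⟩ := hS g hg hfin
    exact ih _ (hn ▸ hlt) hhS hh rfl

variable {α : Type*} {a : α}

theorem pow_apply_cons_of_apply_cons {f h : Equiv.Perm (List α)}
    (hf : ∀ w, f (a :: w) = a :: h w) (k : ℕ) (w : List α) :
    (f ^ k) (a :: w) = a :: (h ^ k) w := by
  induction k generalizing w with
  | zero => rfl
  | succ k ih => rw [pow_succ', Equiv.Perm.mul_apply, ih, hf, pow_succ', Equiv.Perm.mul_apply]

theorem orderOf_lt_of_sq_apply_cons {g h : Equiv.Perm (List α)}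
    (hmove : ∀ w, (g (a :: w)).head? ≠ some a) (hsq : ∀ w, (g ^ 2) (a :: w) = a :: h w)
    (hg : IsOfFinOrder g) : IsOfFinOrder h ∧ orderOf h < orderOf g := by
  have hpow : ∀ k w, (g ^ (2 * k)) (a :: w) = a :: (h ^ k) w := fun k w => by
    rw [pow_mul]
    exact pow_apply_cons_of_apply_cons hsq k w
  have hone : g ^ orderOf g = 1 := pow_orderOf_eq_one g
  obtain ⟨k, hk⟩ : Even (orderOf g) := by
    by_contra hodd
    obtain ⟨k, hk⟩ := Nat.not_even_iff_odd.mp hodd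
    apply hmove ((h ^ k) [])
    rw [← hpow, ← Equiv.Perm.mul_apply, ← pow_succ', ← hk, hone]
    rfl
  have hk1 : h ^ k = 1 := by
    ext1 w
    have := hpow k w
    rw [two_mul, ← hk, hone] at this
    exact (List.cons.inj this).2.symm
  have hkpos : 0 < k := by have := hg.orderOf_pos; omega
  refine ⟨isOfFinOrder_iff_pow_eq_one.mpr ⟨k, hkpos, hk1⟩, ?_⟩
  have := Nat.le_of_dvd hkpos (orderOf_dvd_of_pow_eq_one hk1)
  omega

end OrderDescent

namespace BinAutomaton

variable {Q : Type*} (A : BinAutomaton Q)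

theorem out_eq_xor (q : Q) (x : Bool) : A.out q x = xor (A.out q false) x := by
  cases x
  · simp
  · have hne : A.out q true ≠ A.out q false := (A.out_bij q).1.ne (by decide)
    revert hne
    cases A.out q true <;> cases A.out q false <;> simp

/-- The first letter of the image of `x :: w` under `(L.map A.perm).prod`; the last state of `L`
acts first. -/
def prodOut : List Q → Bool → Bool
  | [], x => x
  | q :: L, x => A.out q (prodOut L x)

/-- The word of states whose product is the section at `x` of `(L.map A.perm).prod`. -/
def prodSection : List Q → Bool → List Q
  | [], _ => []
  | q :: L, x => A.trans q (prodOut A L x) :: prodSection L x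

theorem prod_map_perm_apply_cons (L : List Q) (x : Bool) (w : List Bool) :
    (L.map A.perm).prod (x :: w) = A.prodOut L x :: ((A.prodSection L x).map A.perm).prod w := by
  induction L with
  | nil => rfl
  | cons q L ih =>
    simp only [List.map_cons, List.prod_cons, Equiv.Perm.mul_apply, ih]
    rfl

theorem prodOut_eq_xor (L : List Q) (x : Bool) :
    A.prodOut L x = xor (decide (Odd (L.countP fun q => A.out q false))) x := by
  induction L with
  | nil => simp [prodOut]
  | cons q L ih =>
    rw [prodOut, ih, out_eq_xor, List.countP_cons]
    cases A.out q false <;> simp [Nat.odd_add_one, -Nat.not_odd_iff_even]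

theorem length_prodSection (L : List Q) (x : Bool) : (A.prodSection L x).length = L.length := by
  induction L with
  | nil => rfl
  | cons q L ih => simp [prodSection, ih]

/-- The two sections of a product contain, together, both sections of each of its factors. -/
theorem countP_prodSection_add (p : Q → Bool) (L : List Q) :
    (A.prodSection L true).countP p + (A.prodSection L false).countP p =
      L.countP (fun q => p (A.trans q false)) + L.countP (fun q => p (A.trans q true)) := by
  induction L with
  | nil => rfl
  | cons q L ih =>
    simp only [prodSection, List.countP_cons, prodOut_eq_xor]
    cases decide (Odd (L.countP fun q => A.out q false)) <;> simp <;> split_ifs <;> omega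

section OddProduct

variable {A} {L : List Q} (hL : Odd (L.countP fun q => A.out q false))
include hL

theorem prod_map_perm_apply_false_cons (w : List Bool) :
    (L.map A.perm).prod (false :: w) = true :: ((A.prodSection L false).map A.perm).prod w := by
  rw [prod_map_perm_apply_cons, prodOut_eq_xor, decide_eq_true hL]
  rfl

theorem prod_map_perm_sq_apply_false_cons (w : List Bool) :
    ((L.map A.perm).prod ^ 2) (false :: w) =
      false :: ((A.prodSection L true ++ A.prodSection L false).map A.perm).prod w := by
  rw [sq, Equiv.Perm.mul_apply, prod_map_perm_apply_false_cons hL, prod_map_perm_apply_cons,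
    prodOut_eq_xor, decide_eq_true hL, List.map_append, List.prod_append, Equiv.Perm.mul_apply]
  rfl

end OddProduct

theorem not_isOfFinOrder_prod_of_sections {good : List Q → Prop}
    (hodd : ∀ L, good L → Odd (L.countP fun q => A.out q false))
    (hsec : ∀ L, good L → good (A.prodSection L true ++ A.prodSection L false))
    {L : List Q} (hL : good L) : ¬IsOfFinOrder (L.map A.perm).prod := by
  refine not_isOfFinOrder_of_exists_orderOf_lt
    (S := {g | ∃ L, good L ∧ (L.map A.perm).prod = g}) ?_ ⟨L, hL, rfl⟩
  rintro _ ⟨L, hL, rfl⟩ hfin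
  refine ⟨_, ⟨_, hsec L hL, rfl⟩, orderOf_lt_of_sq_apply_cons (a := false) ?_ ?_ hfin⟩
  · intro w
    simp [prod_map_perm_apply_false_cons (hodd L hL)]
  · exact prod_map_perm_sq_apply_false_cons (hodd L hL)

/-- `c` is the activity of the states whose two sections have different activities; all states
of the other activity have sections of equal activity. -/
theorem not_isOfFinOrder_prod_of_activity_split (c : Bool)
    (hc : ∀ q, (A.out (A.trans q false) false != A.out (A.trans q true) false) =
      (A.out q false == c))
    {L : List Q} (hact : Odd (L.countP fun q => A.out q false))
    (hinact : Odd (L.countP fun q => !(A.out q false))) :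
    ¬IsOfFinOrder (L.map A.perm).prod := by
  refine A.not_isOfFinOrder_prod_of_sections (good := fun L =>
    Odd (L.countP fun q => A.out q false) ∧ Odd (L.countP fun q => !(A.out q false)))
    (fun L hL => hL.1) ?_ ⟨hact, hinact⟩
  rintro M ⟨hMact, hMinact⟩
  have hsplit : Odd (M.countP fun q => A.out q false == c) := by
    cases c
    · simpa using hMinact
    · simpa using hMact
  have hsec : Odd ((A.prodSection M true ++ A.prodSection M false).countP
      fun q => A.out q false) := by
    rw [List.countP_append, countP_prodSection_add, List.countP_add_countP_eq]
    simp only [hc]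
    exact hsplit.add_even (even_two_mul _)
  refine ⟨hsec, ?_⟩
  obtain ⟨j, hj⟩ := hsec
  have hlen := List.length_eq_countP_add_countP (fun q => A.out q false)
    (l := A.prodSection M true ++ A.prodSection M false)
  simp only [List.length_append, length_prodSection, Bool.not_eq_true,
    Bool.decide_eq_false] at hlen
  exact ⟨M.length - j - 1, by omega⟩

end BinAutomaton

theorem automaton_group_not_torsion_general {Q : Type*} (A : BinAutomaton Q)
    (P R : Set Q) (hP : P.Nonempty) (hR : R.Nonempty)
    (hcover : P ∪ R = Set.univ)
    (hact : ((∀ q ∈ P, ∀ x, A.out q x = !x) ∧ (∀ q ∈ R, ∀ x, A.out q x = x)) ∨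
            ((∀ q ∈ P, ∀ x, A.out q x = x) ∧ (∀ q ∈ R, ∀ x, A.out q x = !x)))
    (hii : ∀ q ∈ P, (A.trans q false ∈ P ∧ A.trans q true ∈ P) ∨
                    (A.trans q false ∈ R ∧ A.trans q true ∈ R))
    (hiii : ∀ q ∈ R, (A.trans q false ∈ P ∧ A.trans q true ∈ R) ∨
                     (A.trans q false ∈ R ∧ A.trans q true ∈ P)) :
    (∀ L : List Q,
      Odd (L.countP fun q => A.out q false) →
      Odd (L.countP fun q => !(A.out q false)) →
      ¬ IsOfFinOrder (L.map A.perm).prod) ∧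
    ∃ g ∈ A.autGroup, ¬ IsOfFinOrder g := by
  obtain ⟨c, hPc, hRc⟩ :
      ∃ c, (∀ q ∈ P, A.out q false = !c) ∧ ∀ q ∈ R, A.out q false = c := by
    rcases hact with ⟨hPa, hRa⟩ | ⟨hPa, hRa⟩
    · exact ⟨false, fun q hq => hPa q hq false, fun q hq => hRa q hq false⟩
    · exact ⟨true, fun q hq => hPa q hq false, fun q hq => hRa q hq false⟩
  have hsplit : ∀ q, (A.out (A.trans q false) false != A.out (A.trans q true) false) =
      (A.out q false == c) := by
    intro q
    rcases Set.eq_univ_iff_forall.mp hcover q with hq | hq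
    · rcases hii q hq with ⟨h0, h1⟩ | ⟨h0, h1⟩ <;> simp [hPc, hRc, hq, h0, h1]
    · rcases hiii q hq with ⟨h0, h1⟩ | ⟨h0, h1⟩ <;> simp [hPc, hRc, hq, h0, h1]
  have hinfinite := fun L => A.not_isOfFinOrder_prod_of_activity_split c hsplit (L := L)
  obtain ⟨p, hp⟩ := hP
  obtain ⟨r, hr⟩ := hR
  refine ⟨hinfinite, _, A.autGroup.list_prod_mem ?_, hinfinite [p, r] ?_ ?_⟩
  · simpa [BinAutomaton.autGroup] using
      ⟨Subgroup.subset_closure ⟨p, rfl⟩, Subgroup.subset_closure ⟨r, rfl⟩⟩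
  all_goals cases c <;> simp [hPc p hp, hRc r hr]

/-- Proposition: if the states of an invertible binary automaton split into two
nonempty parts `P` and `R` such that (i) one part contains all active states
and the other all inactive states, (ii) both transitions from any state of `P`
lead into the same part, and (iii) from any state of `R` one transition leads
into `P` and the other into `R`, then every product (in any order) of an odd
number of active generators and an odd number of inactive generators has
infinite order; in particular the automaton group is not a torsion group. -/
theorem automaton_group_not_torsion {Q : Type*} [Fintype Q] (A : BinAutomaton Q)
    (P R : Set Q) (hP : P.Nonempty) (hR : R.Nonempty)
    (hcover : P ∪ R = Set.univ) (hdisj : Disjoint P R)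
    (hact : ((∀ q ∈ P, ∀ x, A.out q x = !x) ∧ (∀ q ∈ R, ∀ x, A.out q x = x)) ∨
            ((∀ q ∈ P, ∀ x, A.out q x = x) ∧ (∀ q ∈ R, ∀ x, A.out q x = !x)))
    (hii : ∀ q ∈ P, (A.trans q false ∈ P ∧ A.trans q true ∈ P) ∨
                    (A.trans q false ∈ R ∧ A.trans q true ∈ R))
    (hiii : ∀ q ∈ R, (A.trans q false ∈ P ∧ A.trans q true ∈ R) ∨
                     (A.trans q false ∈ R ∧ A.trans q true ∈ P)) :
    (∀ L : List Q,
      Odd (L.countP fun q => A.out q false) →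
      Odd (L.countP fun q => !(A.out q false)) →
      ¬ IsOfFinOrder (L.map A.perm).prod) ∧
    ∃ g ∈ A.autGroup, ¬ IsOfFinOrder g :=
  automaton_group_not_torsion_general A P R hP hR hcover hact hii hiii
end

section
/- Let a, b, c be the tree automorphisms of the binary tree defined by the wreath recursions a = σ(c,c), b = (a,b), c = (b,a) (the Bellaterra automaton, number 846). Then the group generated by a, b, c is isomorphic to the free product C₂ ∗ C₂ ∗ C₂ of three cyclic groups of order 2, with a, b, c as the free factors' generators (i.e., a² = b² = c² = 1 and these are the only defining relations). -/
/-- The Bellaterra automaton, number 846: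
`a = σ(c,c)`, `b = (a,b)`, `c = (b,a)` (states `0 = a`, `1 = b`, `2 = c`). -/
def A846 : BinAutomaton (Fin 3) :=
  mkAut3 ![2, 0, 1] ![2, 1, 0] ![true, false, false]

noncomputable def a : Equiv.Perm (List Bool) := A846.perm 0
noncomputable def b : Equiv.Perm (List Bool) := A846.perm 1
noncomputable def c : Equiv.Perm (List Bool) := A846.perm 2

/-- The relations `a² = b² = c² = 1` of the free product `C₂ ∗ C₂ ∗ C₂`. -/
def rels846 : Set (FreeGroup (Fin 3)) :=
  {FreeGroup.of 0 ^ 2, FreeGroup.of 1 ^ 2, FreeGroup.of 2 ^ 2}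

namespace B846

set_option maxRecDepth 40000

abbrev Q3 := Fin 3

/-- parity of the number of `a`'s (letter `0`) in a word. -/
def pa (l : List Q3) : Bool := l.foldr (fun q b => xor (decide (q = 0)) b) false

@[simp] lemma pa_nil : pa [] = false := rfl
@[simp] lemma pa_cons (x : Q3) (t : List Q3) :
    pa (x :: t) = xor (decide (x = 0)) (pa t) := rfl

/-- the section (state-word restriction) of a word at input bit `β`
(the rightmost letter receives `β` first). -/
def sq : List Q3 → Bool → List Q3
  | [], _ => []
  | x :: t, β => A846.trans x (xor β (pa t)) :: sq t β

@[simp] lemma sq_nil (β : Bool) : sq [] β = [] := rfl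
@[simp] lemma sq_cons (x : Q3) (t : List Q3) (β : Bool) :
    sq (x :: t) β = A846.trans x (xor β (pa t)) :: sq t β := rfl

@[simp] lemma sq_length (l : List Q3) (β : Bool) : (sq l β).length = l.length := by
  induction l with
  | nil => rfl
  | cons x t ih => simp [ih]

lemma trans_ne (x y : Q3) (hxy : x ≠ y) (i : Bool) :
    A846.trans x (xor (decide (y = 0)) i) ≠ A846.trans y i := by
  revert hxy; fin_cases x <;> fin_cases y <;> cases i <;> decide

lemma xor_shuffle (u v w : Bool) : xor u (xor v w) = xor v (xor u w) := by
  cases u <;> cases v <;> cases w <;> rfl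

lemma sq_chain {l : List Q3} (hl : l.Chain' (· ≠ ·)) (β : Bool) :
    (sq l β).Chain' (· ≠ ·) := by
  induction l with
  | nil => exact List.isChain_nil
  | cons x t ih =>
    cases t with
    | nil => exact List.isChain_singleton _
    | cons y s =>
      have hl := List.isChain_cons_cons.mp hl
      have h2 := ih hl.2
      rw [sq_cons, sq_cons]
      refine List.isChain_cons_cons.mpr ⟨?_, by have h2' : List.IsChain _ _ := h2; simpa using h2'⟩
      rw [pa_cons, xor_shuffle]
      exact trans_ne x y hl.1 _

/-- the dual map: section at input bit `1`. -/
def Sm (l : List Q3) : List Q3 := sq l true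

/-- the action of a word (rightmost letter acting first). -/
def F (l : List Q3) (v : List Bool) : List Bool := l.foldr (fun q u => A846.act q u) v

@[simp] lemma F_nil (v : List Bool) : F [] v = v := rfl
@[simp] lemma F_cons (x : Q3) (t : List Q3) (v : List Bool) :
    F (x :: t) v = A846.act x (F t v) := rfl

lemma F_input_nil (l : List Q3) : F l [] = [] := by
  induction l with
  | nil => rfl
  | cons x t ih => simp [ih, BinAutomaton.act]

lemma out_eq (x : Q3) (i : Bool) : A846.out x i = xor (decide (x = 0)) i := by
  fin_cases x <;> cases i <;> rfl

lemma F_key (l : List Q3) (β : Bool) (u : List Bool) :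
    F l (β :: u) = (xor β (pa l)) :: F (sq l β) u := by
  induction l with
  | nil => simp
  | cons x t ih =>
    rw [F_cons, ih, sq_cons, pa_cons]
    show A846.out x (xor β (pa t)) :: A846.act (A846.trans x (xor β (pa t))) (F (sq t β) u) = _
    rw [out_eq, F_cons, xor_shuffle]

end B846
namespace B846

/-- the permutation `trans (·, 0)` = the 3-cycle a→c→b→a. -/
def e0 : Equiv.Perm Q3 := Equiv.swap 0 1 * Equiv.swap 0 2
/-- the permutation `trans (·, 1)` = the transposition (a c). -/
def e1 : Equiv.Perm Q3 := Equiv.swap 0 2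

/-- head-step permutation: a word with `a`-parity `pb` turns a prepended
letter `y` into `trE pb y` under the dual map `Sm`. -/
def trE (pb : Bool) : Equiv.Perm Q3 := if pb then e0 else e1

lemma trE_apply (pb : Bool) (y : Q3) : trE pb y = A846.trans y (!pb) := by
  cases pb <;> fin_cases y <;> rfl

lemma sign_trE_true : Equiv.Perm.sign (trE true) = 1 := by decide
lemma sign_trE_false : Equiv.Perm.sign (trE false) = -1 := by decide

lemma trE_head (y : Q3) (p : Bool) :
    trE (xor (decide (y = 0)) p) y = trE p y := by
  fin_cases y <;> cases p <;> rfl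

lemma perm3_sq (σ : Equiv.Perm Q3) (h : Equiv.Perm.sign σ = -1) : σ * σ = 1 := by
  revert h; revert σ; decide

lemma perm3_move (σ : Equiv.Perm Q3) (f x : Q3) (h : Equiv.Perm.sign σ = -1)
    (hf : σ f = f) (hx : x ≠ f) : σ x ≠ x := by
  revert h hf hx; revert σ f x; decide

def bz (b : Bool) : ZMod 2 := if b then 1 else 0
def iz (q : Q3) : ZMod 2 := if q = 0 then 1 else 0

lemma bz_xor (u v : Bool) : bz (xor u v) = bz u + bz v := by cases u <;> cases v <;> rfl

lemma bz_decide_eq_iz (q : Q3) : bz (decide (q = 0)) = iz q := by fin_cases q <;> rfl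

lemma three_distinct (u v w : Q3) (h1 : u ≠ v) (h2 : u ≠ w) (h3 : v ≠ w) :
    iz u + iz v + iz w = 1 := by
  revert h1 h2 h3; fin_cases u <;> fin_cases v <;> fin_cases w <;> decide

/-- holonomy permutation for heads above the dual orbit of `t`. -/
def Phi (t : List Q3) : ℕ → Equiv.Perm Q3
  | 0 => 1
  | k + 1 => trE (pa (Sm^[k] t)) * Phi t k

@[simp] lemma Phi_zero (t : List Q3) : Phi t 0 = 1 := rfl
@[simp] lemma Phi_succ (t : List Q3) (k : ℕ) :
    Phi t (k + 1) = trE (pa (Sm^[k] t)) * Phi t k := rfl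

lemma Sm_cons (x : Q3) (t : List Q3) :
    Sm (x :: t) = trE (pa t) x :: Sm t := by
  rw [trE_apply]
  simp [Sm, Bool.true_xor]

lemma H1 (x : Q3) (t : List Q3) : ∀ j, Sm^[j] (x :: t) = Phi t j x :: Sm^[j] t := by
  intro j
  induction j with
  | zero => simp
  | succ k ih =>
    rw [Function.iterate_succ_apply', ih, Sm_cons, Function.iterate_succ_apply',
      Phi_succ, Equiv.Perm.mul_apply]

lemma Sm_ne_nil {t : List Q3} (ht : t ≠ []) : Sm t ≠ [] := by
  have := sq_length t true
  intro h
  rw [Sm] at h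
  rw [h] at this
  exact ht (List.eq_nil_of_length_eq_zero this.symm)

lemma Sm_iter_ne_nil {t : List Q3} (ht : t ≠ []) (j : ℕ) : Sm^[j] t ≠ [] := by
  induction j with
  | zero => simpa
  | succ k ih => rw [Function.iterate_succ_apply']; exact Sm_ne_nil ih

lemma headI_Sm {t : List Q3} (ht : t ≠ []) :
    (Sm t).headI = trE (pa t) t.headI := by
  obtain ⟨y, s, rfl⟩ := List.exists_cons_of_ne_nil ht
  rw [Sm_cons, List.headI, List.headI, pa_cons, trE_head]

lemma H2 {t : List Q3} (ht : t ≠ []) : ∀ j, (Sm^[j] t).headI = Phi t j t.headI := by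
  intro j
  induction j with
  | zero => simp
  | succ k ih =>
    rw [Function.iterate_succ_apply', headI_Sm (Sm_iter_ne_nil ht k), ih,
      Phi_succ, Equiv.Perm.mul_apply]

lemma H7 {t : List Q3} {L : ℕ} (hL : Sm^[L] t = t) :
    ∀ j, Phi t (L + j) = Phi t j * Phi t L := by
  intro j
  induction j with
  | zero => simp
  | succ k ih =>
    have hiter : Sm^[L + k] t = Sm^[k] t := by
      rw [Nat.add_comm, Function.iterate_add_apply, hL]
    rw [← Nat.add_assoc, Phi_succ, ih, Phi_succ, hiter, mul_assoc]

lemma zmod2_cases : ∀ u : ZMod 2, u = 0 ∨ u = 1 := by decide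

lemma sign_Phi_iff (t : List Q3) :
    ∀ k, (Equiv.Perm.sign (Phi t k) = -1 ↔
      (∑ j ∈ Finset.range k, (1 + bz (pa (Sm^[j] t)))) = 1) := by
  intro k
  induction k with
  | zero =>
    simp only [Phi_zero, map_one, Finset.range_zero, Finset.sum_empty]
    constructor
    · intro h; exact absurd h (by decide)
    · intro h; exact absurd h (by decide)
  | succ k ih =>
    rw [Phi_succ, map_mul, Finset.sum_range_succ]
    cases hpa : pa (Sm^[k] t) with
    | true =>
      rw [sign_trE_true, one_mul, show bz true = 1 from rfl,
        show (1 + 1 : ZMod 2) = 0 from rfl, add_zero]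
      exact ih
    | false =>
      rw [sign_trE_false, show bz false = 0 from rfl, add_zero]
      rcases Int.units_eq_one_or (Equiv.Perm.sign (Phi t k)) with h1 | h1 <;>
        rw [h1] at ih ⊢
      · have hSS : ∑ j ∈ Finset.range k, (1 + bz (pa (Sm^[j] t))) = 0 := by
          rcases zmod2_cases (∑ j ∈ Finset.range k, (1 + bz (pa (Sm^[j] t)))) with h0 | h0
          · exact h0
          · exact absurd (ih.mpr h0) (by decide)
        rw [hSS]
        constructor
        · intro _; rfl
        · intro _; decide
      · have hSS : ∑ j ∈ Finset.range k, (1 + bz (pa (Sm^[j] t))) = 1 := ih.mp rfl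
        rw [hSS]
        constructor
        · intro h; exact absurd h (by decide)
        · intro h; exact absurd h (by decide)

end B846
namespace B846

def cyc (l : List Q3) : ℕ :=
  if l.getLast? = some 1 then 2 ^ (l.length - 1) else 2 ^ l.length

lemma zmod2_alg (u v w p : ZMod 2) (h : u + v + w = 1) :
    1 + (u + p) + (1 + (v + p)) = 1 + w := by revert h; revert u v w p; decide

lemma zmod2_alg2 (u v w : ZMod 2) (h : u + v + w = 1) :
    1 + u + (1 + v) = 1 + w := by revert h; revert u v w; decide

theorem INV : ∀ (n : ℕ) (l : List Q3), l.length = n + 1 → l.Chain' (· ≠ ·) →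
    Sm^[cyc l] l = l ∧
    (∑ j ∈ Finset.range (cyc l), (1 + bz (pa (Sm^[j] l)))) = 1 ∧
    (∑ j ∈ Finset.range (cyc l), (1 + iz ((Sm^[j] l).headI))) = 1 := by
  intro n
  induction n with
  | zero =>
    intro l hlen _
    obtain ⟨q, rfl⟩ := List.length_eq_one_iff.mp hlen
    fin_cases q <;> decide
  | succ m ih =>
    intro l hlen hchain
    have hlne : l ≠ [] := by intro h; rw [h] at hlen; simp at hlen
    obtain ⟨x, t, rfl⟩ := List.exists_cons_of_ne_nil hlne
    have htlen : t.length = m + 1 := by simpa using hlen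
    have htne : t ≠ [] := by intro h; rw [h] at htlen; simp at htlen
    have hchain_t : t.Chain' (· ≠ ·) := hchain.tail
    have hxf : x ≠ t.headI := by
      obtain ⟨y, s, rfl⟩ := List.exists_cons_of_ne_nil htne
      exact (List.isChain_cons_cons.mp hchain).1
    obtain ⟨hL, hS2, hS3⟩ := ih t htlen hchain_t
    set L := cyc t with hLdef
    have hcyc : cyc (x :: t) = 2 * L := by
      have hlast : (x :: t).getLast? = t.getLast? := by
        obtain ⟨y, s, rfl⟩ := List.exists_cons_of_ne_nil htne
        exact List.getLast?_cons_cons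
      rw [hLdef, cyc, cyc, hlast]
      by_cases h : t.getLast? = some 1
      · rw [if_pos h, if_pos h]
        simp only [List.length_cons, htlen, Nat.add_sub_cancel]
        rw [pow_succ, Nat.mul_comm]
      · rw [if_neg h, if_neg h]
        simp only [List.length_cons, htlen]
        rw [pow_succ, Nat.mul_comm]
    have hsign : Equiv.Perm.sign (Phi t L) = -1 := (sign_Phi_iff t L).mpr hS2
    have hfixf : Phi t L t.headI = t.headI := by
      have h := H2 htne L
      rw [hL] at h
      exact h.symm
    have hxx : Phi t L x ≠ x := perm3_move _ _ _ hsign hfixf hxf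
    have hx'f : Phi t L x ≠ t.headI := fun h => hxf ((Phi t L).injective (h.trans hfixf.symm))
    have hsq2 : Phi t L * Phi t L = 1 := perm3_sq _ hsign
    have hiter : ∀ j, Sm^[L + j] t = Sm^[j] t := fun j => by
      rw [Nat.add_comm, Function.iterate_add_apply, hL]
    have hPhiadd := H7 hL
    have hdist : ∀ j : ℕ, iz (Phi t j x) + iz (Phi t j (Phi t L x)) + iz (Phi t j t.headI) = 1 :=
      fun j => three_distinct _ _ _
        (fun h => hxx ((Phi t j).injective h.symm))
        (fun h => hxf ((Phi t j).injective h))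
        (fun h => hx'f ((Phi t j).injective h))
    refine ⟨?_, ?_, ?_⟩
    · rw [hcyc, H1, two_mul, hiter L, hL, hPhiadd L, hsq2]
      simp
    · rw [hcyc, two_mul, Finset.sum_range_add, ← Finset.sum_add_distrib]
      rw [Finset.sum_congr rfl (fun j _ => ?_), hS3]
      rw [H1, H1, hiter j, pa_cons, pa_cons, bz_xor, bz_xor, bz_decide_eq_iz,
        bz_decide_eq_iz, hPhiadd j, Equiv.Perm.mul_apply, H2 htne j]
      exact zmod2_alg _ _ _ _ (hdist j)
    · rw [hcyc, two_mul, Finset.sum_range_add, ← Finset.sum_add_distrib]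
      rw [Finset.sum_congr rfl (fun j _ => ?_), hS3]
      rw [H1, H1, hiter j, List.headI_cons, List.headI_cons, hPhiadd j,
        Equiv.Perm.mul_apply, H2 htne j]
      exact zmod2_alg2 _ _ _ (hdist j)

end B846
namespace B846

lemma prod_eq_F (l : List Q3) : ∀ v, ((l.map A846.perm).prod) v = F l v := by
  induction l with
  | nil => intro v; rfl
  | cons x t ih =>
    intro v
    rw [List.map_cons, List.prod_cons, Equiv.Perm.mul_apply, ih, F_cons]
    rfl

lemma cyc_even {l : List Q3} (hne : l ≠ []) (hnb : l ≠ [1]) : ((cyc l : ℕ) : ZMod 2) = 0 := by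
  have h2 : ((2 : ℕ) : ZMod 2) = 0 := rfl
  have key : ∀ k : ℕ, k ≠ 0 → (((2 : ℕ) ^ k : ℕ) : ZMod 2) = 0 := by
    intro k hk
    rw [Nat.cast_pow, h2, zero_pow hk]
  rw [cyc]
  by_cases h : l.getLast? = some 1
  · rw [if_pos h]
    apply key
    intro hlen0
    have h1 : l.length = 1 := by
      cases l with
      | nil => exact absurd rfl hne
      | cons x t =>
        cases t with
        | nil => rfl
        | cons y s => simp only [List.length_cons] at hlen0; omega
    obtain ⟨q, rfl⟩ := List.length_eq_one_iff.mp h1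
    have hq : q = 1 := by simpa using h
    subst hq
    exact hnb rfl
  · rw [if_neg h]
    apply key
    intro hlen0
    exact hne (List.eq_nil_of_length_eq_zero hlen0)

lemma exists_pa_true {l : List Q3} (hne : l ≠ []) (hch : l.Chain' (· ≠ ·)) (hnb : l ≠ [1]) :
    ∃ j, pa (Sm^[j] l) = true := by
  by_contra h
  push_neg at h
  have hall : ∀ j, pa (Sm^[j] l) = false := fun j => Bool.eq_false_iff.mpr (h j)
  obtain ⟨n, hn⟩ : ∃ n, l.length = n + 1 := by
    cases l with
    | nil => exact absurd rfl hne
    | cons x t => exact ⟨t.length, rfl⟩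
  obtain ⟨-, hS2, -⟩ := INV n l hn hch
  rw [Finset.sum_congr rfl (fun j _ => by rw [hall j]), Finset.sum_const, Finset.card_range,
    nsmul_eq_mul, cyc_even hne hnb, zero_mul] at hS2
  exact absurd hS2 (by decide)

lemma witness : ∀ (j : ℕ) (l : List Q3), pa (Sm^[j] l) = true →
    F l (List.replicate j true ++ [false]) ≠ List.replicate j true ++ [false] := by
  intro j
  induction j with
  | zero =>
    intro l hl
    simp only [Function.iterate_zero, id_eq] at hl
    rw [List.replicate_zero, List.nil_append, F_key, hl, F_input_nil]
    simp
  | succ k ih =>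
    intro l hl
    rw [List.replicate_succ, List.cons_append, F_key]
    cases hp : pa l with
    | true => simp
    | false =>
      intro he
      injection he with h1 h2
      have hl' : pa (Sm^[k] (sq l true)) = true := by
        rw [Function.iterate_succ_apply] at hl
        exact hl
      exact ih (sq l true) hl' h2

theorem word_ne_one {l : List Q3} (hne : l ≠ []) (hch : l.Chain' (· ≠ ·)) :
    (l.map A846.perm).prod ≠ 1 := by
  intro h1
  have hfix : ∀ v, F l v = v := fun v => by rw [← prod_eq_F, h1]; rfl
  by_cases hb : l = [1]
  · subst hb
    have h2 := hfix [false, false]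
    revert h2
    decide
  · obtain ⟨j, hj⟩ := exists_pa_true hne hch hb
    exact witness j l hj (hfix _)

end B846
namespace B846

lemma out_out (q : Q3) (i : Bool) : A846.out q (A846.out q i) = i := by
  fin_cases q <;> cases i <;> rfl

lemma trans_out (q : Q3) (i : Bool) : A846.trans q (A846.out q i) = A846.trans q i := by
  fin_cases q <;> cases i <;> rfl

lemma act_act (q : Q3) (u : List Bool) : A846.act q (A846.act q u) = u := by
  induction u generalizing q with
  | nil => rfl
  | cons i w ih =>
    show A846.act q (A846.out q i :: A846.act (A846.trans q i) w) = i :: w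
    show A846.out q (A846.out q i) :: A846.act (A846.trans q (A846.out q i))
      (A846.act (A846.trans q i) w) = i :: w
    rw [out_out, trans_out, ih]

lemma perm_invol (q : Q3) : A846.perm q * A846.perm q = 1 :=
  Equiv.ext fun u => act_act q u

lemma hrels : ∀ r ∈ rels846, (FreeGroup.lift fun i => A846.perm i) r = 1 := by
  intro r hr
  have : r = FreeGroup.of 0 ^ 2 ∨ r = FreeGroup.of 1 ^ 2 ∨ r = FreeGroup.of 2 ^ 2 := by
    simpa [rels846] using hr
  rcases this with rfl | rfl | rfl <;>
    rw [map_pow, FreeGroup.lift_apply_of, pow_two, perm_invol]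

/-- the canonical homomorphism from the presented group to the tree. -/
noncomputable def φ : PresentedGroup rels846 →* Equiv.Perm (List Bool) :=
  PresentedGroup.toGroup hrels

lemma phi_of (i : Q3) : φ (PresentedGroup.of i) = A846.perm i :=
  PresentedGroup.toGroup.of hrels

lemma pg_sq (i : Q3) : (PresentedGroup.of (rels := rels846) i) ^ 2 = 1 := by
  have hmem : ((FreeGroup.of i) ^ 2 : FreeGroup Q3) ∈ Subgroup.normalClosure rels846 := by
    apply Subgroup.subset_normalClosure
    fin_cases i
    · exact Set.mem_insert _ _
    · exact Set.mem_insert_of_mem _ (Set.mem_insert _ _)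
    · exact Set.mem_insert_of_mem _ (Set.mem_insert_of_mem _ rfl)
  have h2 : (PresentedGroup.of (rels := rels846) i) ^ 2
      = (QuotientGroup.mk ((FreeGroup.of i) ^ 2) : PresentedGroup rels846) := rfl
  refine h2.trans ?_
  apply (QuotientGroup.eq_one_iff _).mpr
  exact hmem

lemma pg_mul_self (i : Q3) :
    PresentedGroup.of (rels := rels846) i * PresentedGroup.of i = 1 := by
  rw [← pow_two]; exact pg_sq i

lemma pg_inv (i : Q3) :
    (PresentedGroup.of (rels := rels846) i)⁻¹ = PresentedGroup.of i :=
  inv_eq_of_mul_eq_one_right (pg_mul_self i)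

/-- one step of free reduction over an involutive alphabet. -/
def nfCons (x : Q3) : List Q3 → List Q3
  | [] => [x]
  | y :: s => if x = y then s else x :: y :: s

/-- free reduction over an involutive alphabet. -/
def nf : List Q3 → List Q3
  | [] => []
  | x :: t => nfCons x (nf t)

lemma nfCons_chain {l : List Q3} (hl : l.Chain' (· ≠ ·)) (x : Q3) :
    (nfCons x l).Chain' (· ≠ ·) := by
  cases l with
  | nil => exact List.isChain_singleton x
  | cons y s =>
    rw [nfCons]
    by_cases h : x = y
    · rw [if_pos h]; exact hl.tail
    · rw [if_neg h]; exact List.isChain_cons_cons.mpr ⟨h, hl⟩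

lemma nf_chain (l : List Q3) : (nf l).Chain' (· ≠ ·) := by
  induction l with
  | nil => exact List.isChain_nil
  | cons x t ih => exact nfCons_chain ih x

lemma nfCons_prod (x : Q3) (l : List Q3) :
    ((nfCons x l).map (PresentedGroup.of (rels := rels846))).prod
      = PresentedGroup.of x * (l.map PresentedGroup.of).prod := by
  cases l with
  | nil => simp [nfCons]
  | cons y s =>
    rw [nfCons]
    by_cases h : x = y
    · rw [if_pos h, List.map_cons, List.prod_cons, ← mul_assoc, h, pg_mul_self, one_mul]
    · rw [if_neg h, List.map_cons, List.prod_cons]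

lemma nf_prod (l : List Q3) :
    ((nf l).map (PresentedGroup.of (rels := rels846))).prod = (l.map PresentedGroup.of).prod := by
  induction l with
  | nil => rfl
  | cons x t ih => rw [nf, nfCons_prod, ih, List.map_cons, List.prod_cons]

lemma prod_reverse_inv (l : List Q3) :
    ((l.map (PresentedGroup.of (rels := rels846))).prod)⁻¹
      = (l.reverse.map PresentedGroup.of).prod := by
  induction l with
  | nil => simp
  | cons x t ih =>
    rw [List.map_cons, List.prod_cons, mul_inv_rev, ih, pg_inv, List.reverse_cons,
      List.map_append, List.prod_append]
    simp

lemma exists_word (g : PresentedGroup rels846) :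
    ∃ l : List Q3, l.Chain' (· ≠ ·) ∧ g = (l.map PresentedGroup.of).prod := by
  have hg : g ∈ Subgroup.closure (Set.range (PresentedGroup.of (rels := rels846))) := by
    rw [PresentedGroup.closure_range_of]; trivial
  induction hg using Subgroup.closure_induction with
  | mem x hx =>
    obtain ⟨i, rfl⟩ := hx
    exact ⟨[i], List.isChain_singleton i, by simp⟩
  | one => exact ⟨[], List.isChain_nil, by simp⟩
  | mul x y _ _ hx hy =>
    obtain ⟨lx, _, rfl⟩ := hx
    obtain ⟨ly, _, rfl⟩ := hy
    refine ⟨nf (lx ++ ly), nf_chain _, ?_⟩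
    rw [nf_prod, List.map_append, List.prod_append]
  | inv x _ hx =>
    obtain ⟨lx, hcx, rfl⟩ := hx
    refine ⟨lx.reverse, ?_, prod_reverse_inv lx⟩
    refine List.isChain_reverse.mpr ?_
    exact hcx.imp fun _ _ h => h.symm

lemma phi_inj : Function.Injective φ := by
  rw [injective_iff_map_eq_one]
  intro g hg
  obtain ⟨l, hch, rfl⟩ := exists_word g
  have hφ : φ ((l.map PresentedGroup.of).prod) = (l.map A846.perm).prod := by
    rw [map_list_prod, List.map_map]
    congr 1
  rw [hφ] at hg
  cases l with
  | nil => rfl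
  | cons x t => exact absurd hg (word_ne_one (List.cons_ne_nil x t) hch)

lemma phi_range : φ.range = Subgroup.closure {a, b, c} := by
  rw [MonoidHom.range_eq_map, ← PresentedGroup.closure_range_of rels846,
    MonoidHom.map_closure]
  congr 1
  rw [← Set.range_comp]
  ext g
  simp only [Set.mem_range, Function.comp_apply, Set.mem_insert_iff, Set.mem_singleton_iff]
  constructor
  · rintro ⟨i, rfl⟩
    fin_cases i
    · exact Or.inl (phi_of 0)
    · exact Or.inr (Or.inl (phi_of 1))
    · exact Or.inr (Or.inr (phi_of 2))
  · rintro (rfl | rfl | rfl)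
    exacts [⟨0, phi_of 0⟩, ⟨1, phi_of 1⟩, ⟨2, phi_of 2⟩]

end B846

/-- The group generated by the Bellaterra automaton is isomorphic to the free
product `C₂ ∗ C₂ ∗ C₂ = ⟨a, b, c ∣ a² = b² = c² = 1⟩`, with `a`, `b`, `c`
corresponding to the generators of the three free factors. -/
theorem bellaterra_group_is_free_product_of_three_C2 :
    ∃ e : PresentedGroup rels846 ≃* ↥(Subgroup.closure {a, b, c}),
      (↑(e (PresentedGroup.of 0)) : Equiv.Perm (List Bool)) = a ∧
      (↑(e (PresentedGroup.of 1)) : Equiv.Perm (List Bool)) = b ∧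
      (↑(e (PresentedGroup.of 2)) : Equiv.Perm (List Bool)) = c := by
  refine ⟨(MonoidHom.ofInjective B846.phi_inj).trans (MulEquiv.subgroupCongr B846.phi_range),
    ?_, ?_, ?_⟩ <;>
    simp only [MulEquiv.trans_apply, MulEquiv.subgroupCongr_apply,
      MonoidHom.ofInjective_apply, B846.phi_of] <;> rfl
end
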